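/- arXiv:2502.18868 — 7 statements merged into one kernel-verified Lean document; each statement's English description precedes it below -/
import Mathlib

section
/- Let r, n ∈ ℕ, A ∈ ℝ^{r×r}, E ∈ ℝ^{r×n}, let S ∈ ℝ^{r×r} and P ∈ ℝ^{2n×2n} be symmetric positive definite, and let α > 0, ρ > 0. If the symmetric block matrix with blocks [AᵀS + SA + ρS, α^{-1}S E G₀; α^{-1}G₀ᵀEᵀS, −ρP] is negative definite, then for every ζ ∈ ℝ^r and every x ∈ ℝ^{2n} with σ := G₀x ≠ 0 one has ζᵀ(AᵀS + SA)ζ + 2 ζᵀ S E σ < ρ (xᵀR(σ)PR(σ)x − ζᵀSζ). -/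
open Matrix

noncomputable section

/-- Euclidean norm of a real vector. -/
def enorm {n : ℕ} (v : Fin n → ℝ) : ℝ := Real.sqrt (v ⬝ᵥ v)

/-- The block matrix `G₀ = [I_n 0] ∈ ℝ^{n×2n}`. -/
def G0 (n : ℕ) : Matrix (Fin n) (Fin n ⊕ Fin n) ℝ := fromCols 1 0

/-- The scalar gain `c(σ) = 1/√‖σ‖ + α`. -/
def cfun {n : ℕ} (α : ℝ) (σ : Fin n → ℝ) : ℝ := 1 / Real.sqrt (enorm σ) + α

/-- The matrix `R(σ) = diag(c(σ)I_n, I_n)`. -/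
def Rmat {n : ℕ} (α : ℝ) (σ : Fin n → ℝ) : Matrix (Fin n ⊕ Fin n) (Fin n ⊕ Fin n) ℝ :=
  fromBlocks (cfun α σ • 1) 0 0 1

/-! Test the negative definite LMI on the vector `(tζ, R(σ)x)` with `t = α / c(σ)`. Since
`G₀ R(σ) x = c(σ) σ`, the off-diagonal term becomes exactly `2 ζᵀ S E σ`, while replacing `t²`
by `1` in the `(1,1)` block only lowers the form, because that block is itself negative
semidefinite (test the LMI on `(ζ, 0)`) and `t² ≤ 1` as `c(σ) ≥ α`. -/

section QuadraticForm

variable {m n R : Type*} [Fintype m] [Fintype n]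

theorem sumElim_dotProduct_fromBlocks_transpose_mulVec [CommSemiring R] (A : Matrix m m R)
    (B : Matrix m n R) (D : Matrix n n R) (u : m → R) (v : n → R) :
    Sum.elim u v ⬝ᵥ (fromBlocks A B Bᵀ D *ᵥ Sum.elim u v) =
      u ⬝ᵥ (A *ᵥ u) + 2 * (u ⬝ᵥ (B *ᵥ v)) + v ⬝ᵥ (D *ᵥ v) := by
  rw [fromBlocks_mulVec, sumElim_dotProduct_sumElim, Sum.elim_comp_inl, Sum.elim_comp_inr,
    dotProduct_add, dotProduct_add, dotProduct_mulVec v Bᵀ, vecMul_transpose,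
    dotProduct_comm (B *ᵥ v)]
  ring

theorem dotProduct_transpose_mul_mul_mulVec [CommSemiring R] (M : Matrix m n R)
    (P : Matrix m m R) (x : n → R) :
    x ⬝ᵥ ((Mᵀ * P * M) *ᵥ x) = (M *ᵥ x) ⬝ᵥ (P *ᵥ (M *ᵥ x)) := by
  rw [← mulVec_mulVec, ← mulVec_mulVec, dotProduct_mulVec, vecMul_transpose]

variable [CommRing R] [LinearOrder R] [IsStrictOrderedRing R] [StarRing R] [TrivialStar R]

theorem dotProduct_mulVec_neg_of_neg_posDef {M : Matrix m m R} (hM : (-M).PosDef) {w : m → R}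
    (hw : w ≠ 0) : w ⬝ᵥ (M *ᵥ w) < 0 := by
  simpa [neg_mulVec] using hM.dotProduct_mulVec_pos hw

theorem add_two_mul_add_neg_of_neg_posDef_fromBlocks {A : Matrix m m R} {B : Matrix m n R}
    {D : Matrix n n R} (hM : (-fromBlocks A B Bᵀ D).PosDef) (u : m → R) {v : n → R}
    (hv : v ≠ 0) {t : R} (ht : t ^ 2 ≤ 1) :
    u ⬝ᵥ (A *ᵥ u) + 2 * t * (u ⬝ᵥ (B *ᵥ v)) + v ⬝ᵥ (D *ᵥ v) < 0 := by
  have hA : u ⬝ᵥ (A *ᵥ u) ≤ 0 := by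
    rcases eq_or_ne u 0 with rfl | hu
    · simp
    · have hu0 : Sum.elim u (0 : n → R) ≠ 0 := fun h =>
        hu (by simpa using congrArg (· ∘ Sum.inl) h)
      simpa [sumElim_dotProduct_fromBlocks_transpose_mulVec] using
        (dotProduct_mulVec_neg_of_neg_posDef hM hu0).le
  have htv : Sum.elim (t • u) v ≠ 0 := fun h => hv (by simpa using congrArg (· ∘ Sum.inr) h)
  have h := dotProduct_mulVec_neg_of_neg_posDef hM htv
  rw [sumElim_dotProduct_fromBlocks_transpose_mulVec] at h
  simp only [mulVec_smul, dotProduct_smul, smul_dotProduct, smul_eq_mul] at h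
  nlinarith

end QuadraticForm

section

variable {n : ℕ} (α : ℝ) (σ : Fin n → ℝ)

theorem le_cfun : α ≤ cfun α σ := by
  unfold cfun
  have : 0 ≤ 1 / Real.sqrt (enorm σ) := by positivity
  linarith

theorem Rmat_transpose : (Rmat α σ)ᵀ = Rmat α σ := by
  simp [Rmat, fromBlocks_transpose]

theorem G0_mul_Rmat : G0 n * Rmat α σ = cfun α σ • G0 n := by
  ext i (j | j) <;> simp [G0, Rmat, fromCols_mul_fromBlocks]

end

theorem stmt0_general {r n : ℕ} (A : Matrix (Fin r) (Fin r) ℝ) (E : Matrix (Fin r) (Fin n) ℝ)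
    (S : Matrix (Fin r) (Fin r) ℝ) (P : Matrix (Fin n ⊕ Fin n) (Fin n ⊕ Fin n) ℝ)
    (hS : S.PosDef) (α ρ : ℝ) (hα : 0 < α)
    (hLMI : (-(fromBlocks (Aᵀ * S + S * A + ρ • S) (α⁻¹ • (S * E * G0 n))
      (α⁻¹ • ((G0 n)ᵀ * Eᵀ * S)) (-(ρ • P)))).PosDef) :
    ∀ (ζ : Fin r → ℝ) (x : Fin n ⊕ Fin n → ℝ), G0 n *ᵥ x ≠ 0 →
      ζ ⬝ᵥ ((Aᵀ * S + S * A) *ᵥ ζ) + 2 * (ζ ⬝ᵥ (S *ᵥ (E *ᵥ (G0 n *ᵥ x)))) <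
        ρ * (x ⬝ᵥ ((Rmat α (G0 n *ᵥ x) * P * Rmat α (G0 n *ᵥ x)) *ᵥ x)
          - ζ ⬝ᵥ (S *ᵥ ζ)) := by
  intro ζ x hσ
  set σ := G0 n *ᵥ x
  set c := cfun α σ
  set y := Rmat α σ *ᵥ x
  have hc : 0 < c := hα.trans_le (le_cfun α σ)
  have hGy : G0 n *ᵥ y = c • σ := by rw [mulVec_mulVec, G0_mul_Rmat, smul_mulVec]
  have hy : y ≠ 0 := fun h =>
    hσ <| (smul_eq_zero.mp (by rw [← hGy, h, mulVec_zero])).resolve_left hc.ne'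
  have ht : (α / c) ^ 2 ≤ 1 := by
    rw [div_pow, div_le_one (by positivity)]
    exact pow_le_pow_left₀ hα.le (le_cfun α σ) 2
  have hSt : Sᵀ = S := isHermitian_iff_isSymm.mp hS.isHermitian
  have hB : α⁻¹ • ((G0 n)ᵀ * Eᵀ * S) = (α⁻¹ • (S * E * G0 n))ᵀ := by
    rw [transpose_smul, transpose_mul, transpose_mul, hSt, Matrix.mul_assoc]
  rw [hB] at hLMI
  have key := add_two_mul_add_neg_of_neg_posDef_fromBlocks hLMI ζ hy ht
  have hcross : 2 * (α / c) * (ζ ⬝ᵥ ((α⁻¹ • (S * E * G0 n)) *ᵥ y)) =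
      2 * (ζ ⬝ᵥ (S *ᵥ (E *ᵥ σ))) := by
    rw [smul_mulVec, ← mulVec_mulVec, ← mulVec_mulVec, hGy, mulVec_smul, mulVec_smul,
      dotProduct_smul, dotProduct_smul, smul_eq_mul, smul_eq_mul]
    field_simp
  have hV : x ⬝ᵥ ((Rmat α σ * P * Rmat α σ) *ᵥ x) = y ⬝ᵥ (P *ᵥ y) := by
    simpa only [Rmat_transpose] using dotProduct_transpose_mul_mul_mulVec (Rmat α σ) P x
  rw [hcross] at key
  simp only [add_mulVec (Aᵀ * S + S * A), neg_mulVec, smul_mulVec, dotProduct_add,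
    dotProduct_neg, dotProduct_smul, smul_eq_mul] at key
  rw [hV]
  linarith

/-- Lemma 1 of the paper: the LMI (30) implies `v̇ < ρ(V − v)`. -/
theorem stmt0 {r n : ℕ} (A : Matrix (Fin r) (Fin r) ℝ) (E : Matrix (Fin r) (Fin n) ℝ)
    (S : Matrix (Fin r) (Fin r) ℝ) (P : Matrix (Fin n ⊕ Fin n) (Fin n ⊕ Fin n) ℝ)
    (hS : S.PosDef) (hP : P.PosDef) (α ρ : ℝ) (hα : 0 < α) (hρ : 0 < ρ)
    (hLMI : (-(fromBlocks (Aᵀ * S + S * A + ρ • S) (α⁻¹ • (S * E * G0 n))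
      (α⁻¹ • ((G0 n)ᵀ * Eᵀ * S)) (-(ρ • P)))).PosDef) :
    ∀ (ζ : Fin r → ℝ) (x : Fin n ⊕ Fin n → ℝ), G0 n *ᵥ x ≠ 0 →
      ζ ⬝ᵥ ((Aᵀ * S + S * A) *ᵥ ζ) + 2 * (ζ ⬝ᵥ (S *ᵥ (E *ᵥ (G0 n *ᵥ x)))) <
        ρ * (x ⬝ᵥ ((Rmat α (G0 n *ᵥ x) * P * Rmat α (G0 n *ᵥ x)) *ᵥ x)
          - ζ ⬝ᵥ (S *ᵥ ζ)) :=
  stmt0_general A E S P hS α ρ hα hLMI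
end
end

section
/- Let X ∈ ℝ^{m×m} be symmetric, P ∈ ℝ^{k×k} symmetric positive definite, ρ > 0, C ∈ ℝ^{k×m}, and let s, t ∈ ℝ satisfy |t| ≤ s. If the symmetric block matrix [X, sCᵀ; sC, −ρP] is negative definite, then the symmetric block matrix [X, tCᵀ; tC, −ρP] is also negative definite. -/
/-!
Write `M(r) = [A, r B; r C, D]`. Conjugating by the signature matrix `diag(1, -1)` flips the
sign of the off-diagonal blocks, so `M(s) ≻ 0` gives `M(-s) ≻ 0`. For `|t| ≤ s` the matrix
`M(t)` is a convex combination of `M(s)` and `M(-s)`, and positive definite matrices form a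
convex cone.
-/

open Matrix
open scoped ComplexOrder

variable {m n : Type*} {𝕜 : Type*} [RCLike 𝕜]

lemma Matrix.PosDef.smul_add_smul {A B : Matrix n n 𝕜} (hA : A.PosDef) (hB : B.PosDef)
    {a b : ℝ} (ha : 0 ≤ a) (hb : 0 ≤ b) (hab : a + b = 1) : (a • A + b • B).PosDef := by
  rcases ha.eq_or_lt with rfl | ha
  · simpa [show b = 1 by linarith] using hB
  · exact (hA.smul ha).add_posSemidef (hB.posSemidef.smul hb)

variable [Fintype m] [Fintype n] [DecidableEq m] [DecidableEq n]

lemma Matrix.fromBlocks_signature_conj (A : Matrix m m 𝕜) (B : Matrix m n 𝕜)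
    (C : Matrix n m 𝕜) (D : Matrix n n 𝕜) :
    fromBlocks 1 0 0 (-1) * fromBlocks A B C D * fromBlocks 1 0 0 (-1) =
      fromBlocks A (-B) (-C) D := by
  simp [fromBlocks_multiply]

lemma Matrix.PosDef.fromBlocks_neg_offDiag {A : Matrix m m 𝕜} {B : Matrix m n 𝕜}
    {C : Matrix n m 𝕜} {D : Matrix n n 𝕜} (h : (fromBlocks A B C D).PosDef) :
    (fromBlocks A (-B) (-C) D).PosDef := by
  set S : Matrix (m ⊕ n) (m ⊕ n) 𝕜 := fromBlocks 1 0 0 (-1)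
  have hSS : S * S = 1 := by simp [S, fromBlocks_multiply]
  have hSH : Sᴴ = S := by simp [S, fromBlocks_conjTranspose]
  have hinj : Function.Injective S.mulVec := fun v w hvw => by
    simpa [mulVec_mulVec, hSS] using congrArg S.mulVec hvw
  simpa [hSH, S, fromBlocks_signature_conj] using h.conjTranspose_mul_mul_same hinj

lemma Matrix.PosDef.fromBlocks_smul_offDiag_of_abs_le {A : Matrix m m 𝕜} {B : Matrix m n 𝕜}
    {C : Matrix n m 𝕜} {D : Matrix n n 𝕜} {s t : ℝ} (hts : |t| ≤ s)
    (h : (fromBlocks A (s • B) (s • C) D).PosDef) :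
    (fromBlocks A (t • B) (t • C) D).PosDef := by
  rcases (abs_nonneg t).trans hts |>.eq_or_lt with rfl | hs
  · rwa [abs_nonpos_iff.mp hts]
  have hneg : (fromBlocks A ((-s) • B) ((-s) • C) D).PosDef := by
    simpa only [neg_smul] using h.fromBlocks_neg_offDiag
  have hab : (s + t) / (2 * s) + (s - t) / (2 * s) = 1 := by field_simp; ring
  have hcomb : (s + t) / (2 * s) * s + (s - t) / (2 * s) * -s = t := by field_simp; ring
  convert h.smul_add_smul hneg (div_nonneg (by linarith [neg_abs_le t]) (by positivity))
    (div_nonneg (by linarith [le_abs_self t]) (by positivity)) hab using 1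
  simp only [fromBlocks_smul, fromBlocks_add, smul_smul, ← add_smul, hab, hcomb, one_smul]

theorem stmt1_general {m k : ℕ} (X : Matrix (Fin m) (Fin m) ℝ)
    (P : Matrix (Fin k) (Fin k) ℝ) (ρ : ℝ)
    (C : Matrix (Fin k) (Fin m) ℝ) (s t : ℝ) (hts : |t| ≤ s)
    (h : (-(fromBlocks X (s • Cᵀ) (s • C) (-(ρ • P)))).PosDef) :
    (-(fromBlocks X (t • Cᵀ) (t • C) (-(ρ • P)))).PosDef := by
  rw [fromBlocks_neg, ← smul_neg, ← smul_neg] at h ⊢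
  exact h.fromBlocks_smul_offDiag_of_abs_le hts

/-- Monotonicity of the LMI in the off-diagonal scaling (key step of Lemma 1 of the paper):
if `[X, sCᵀ; sC, −ρP] ≺ 0` and `|t| ≤ s`, then `[X, tCᵀ; tC, −ρP] ≺ 0`. -/
theorem stmt1 {m k : ℕ} (X : Matrix (Fin m) (Fin m) ℝ) (hX : X.IsHermitian)
    (P : Matrix (Fin k) (Fin k) ℝ) (hP : P.PosDef) (ρ : ℝ) (hρ : 0 < ρ)
    (C : Matrix (Fin k) (Fin m) ℝ) (s t : ℝ) (hts : |t| ≤ s)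
    (h : (-(fromBlocks X (s • Cᵀ) (s • C) (-(ρ • P)))).PosDef) :
    (-(fromBlocks X (t • Cᵀ) (t • C) (-(ρ • P)))).PosDef :=
  stmt1_general X P ρ C s t hts h
end

section
/- Let n ∈ ℕ, α > 0, and σ ∈ ℝⁿ with σ ≠ 0. Then 0 < ρ_σ < 1, and with Γ_σ := G₀ᵀ − ρ_σ E₀ Π_σ ∈ ℝ^{2n×n} one has: Γ_σ Γ_σᵀ is positive semidefinite and Γ_σ Γ_σᵀ ⪯ G₀ᵀG₀, i.e. G₀ᵀG₀ − Γ_σ Γ_σᵀ is positive semidefinite. -/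
open Matrix

noncomputable section

/-- The block matrix `E₀ = [(1/2)I_n; 0] ∈ ℝ^{2n×n}`. -/
def E0 (n : ℕ) : Matrix (Fin n ⊕ Fin n) (Fin n) ℝ := fromRows ((2 : ℝ)⁻¹ • 1) 0

/-- The scalar `ρ_σ = 1/(c(σ)√‖σ‖)`. -/
def rhoSigma {n : ℕ} (α : ℝ) (σ : Fin n → ℝ) : ℝ := 1 / (cfun α σ * Real.sqrt (enorm σ))

/-- The rank-one projection `Π_σ = (σ/‖σ‖)(σ/‖σ‖)ᵀ`. -/
def PiSigma {n : ℕ} (σ : Fin n → ℝ) : Matrix (Fin n) (Fin n) ℝ :=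
  vecMulVec ((_root_.enorm σ)⁻¹ • σ) ((_root_.enorm σ)⁻¹ • σ)

/-!
Since `E₀ = ½ G₀ᵀ`, one has `Γ_σ = G₀ᵀ (I - (ρ/2) Π_σ)`. As `Π_σ` is an orthogonal projection,
`I - (I - tΠ)(I - tΠ)ᵀ = (2t - t²) Π`, so `G₀ᵀG₀ - Γ_σΓ_σᵀ = (ρ - ρ²/4) G₀ᵀ Π_σ G₀`, which is
positive semidefinite because `ρ_σ = 1 / (1 + α √‖σ‖)` lies in `(0, 1)`.
-/

namespace Matrix

variable {m n R : Type*} [Fintype m] [Fintype n]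

lemma posSemidef_conjTranspose_mul_sub_of_posSemidef_one_sub [DecidableEq n]
    [Ring R] [PartialOrder R] [StarRing R] (B : Matrix n m R) {M : Matrix n n R}
    (hM : (1 - M * Mᴴ).PosSemidef) : (Bᴴ * B - (Bᴴ * M) * (Bᴴ * M)ᴴ).PosSemidef := by
  have h : Bᴴ * B - (Bᴴ * M) * (Bᴴ * M)ᴴ = Bᴴ * (1 - M * Mᴴ) * B := by
    simp only [conjTranspose_mul, conjTranspose_conjTranspose, Matrix.mul_sub, Matrix.sub_mul,
      Matrix.mul_one, Matrix.mul_assoc]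
  rw [h]
  exact hM.conjTranspose_mul_mul_same B

lemma one_sub_mul_conjTranspose_one_sub_smul [DecidableEq n] [CommRing R] [StarRing R]
    {P : Matrix n n R} (hP : P.IsHermitian) (hPP : P * P = P) {t : R} (ht : IsSelfAdjoint t) :
    1 - (1 - t • P) * (1 - t • P)ᴴ = (2 * t - t * t) • P := by
  rw [conjTranspose_sub, conjTranspose_one, conjTranspose_smul, ht.star_eq, hP.eq]
  simp only [Matrix.sub_mul, Matrix.mul_sub, Matrix.one_mul, Matrix.mul_one, Matrix.smul_mul,
    Matrix.mul_smul, hPP]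
  module

lemma vecMulVec_mul_self_of_star_dotProduct_eq_one [CommSemiring R] [StarRing R] {u : n → R}
    (hu : star u ⬝ᵥ u = 1) :
    vecMulVec u (star u) * vecMulVec u (star u) = vecMulVec u (star u) := by
  rw [vecMulVec_mul_vecMulVec, hu, one_smul]

end Matrix

section

variable {n : ℕ} {σ : Fin n → ℝ}

lemma enorm_mul_self (σ : Fin n → ℝ) : _root_.enorm σ * _root_.enorm σ = σ ⬝ᵥ σ :=
  Real.mul_self_sqrt (by simpa using dotProduct_star_self_nonneg σ)

lemma enorm_pos_of_ne_zero (hσ : σ ≠ 0) : 0 < _root_.enorm σ :=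
  Real.sqrt_pos.mpr (by simpa using dotProduct_star_self_pos_iff.mpr hσ)

lemma rhoSigma_eq (α : ℝ) (hσ : σ ≠ 0) :
    rhoSigma α σ = 1 / (1 + α * Real.sqrt (_root_.enorm σ)) := by
  have hs : 0 < Real.sqrt (_root_.enorm σ) := Real.sqrt_pos.mpr (enorm_pos_of_ne_zero hσ)
  rw [rhoSigma, cfun, add_mul, one_div_mul_cancel hs.ne']

lemma rhoSigma_pos {α : ℝ} (hα : 0 ≤ α) (hσ : σ ≠ 0) : 0 < rhoSigma α σ := by
  rw [rhoSigma_eq α hσ]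
  positivity

lemma rhoSigma_lt_one {α : ℝ} (hα : 0 < α) (hσ : σ ≠ 0) : rhoSigma α σ < 1 := by
  have hs : 0 < Real.sqrt (_root_.enorm σ) := Real.sqrt_pos.mpr (enorm_pos_of_ne_zero hσ)
  rw [rhoSigma_eq α hσ, div_lt_one (by positivity)]
  nlinarith

lemma PiSigma_eq_vecMulVec (σ : Fin n → ℝ) :
    PiSigma σ = vecMulVec ((_root_.enorm σ)⁻¹ • σ) (star ((_root_.enorm σ)⁻¹ • σ)) := by
  rw [PiSigma, star_trivial]

lemma posSemidef_PiSigma (σ : Fin n → ℝ) : (PiSigma σ).PosSemidef := by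
  rw [PiSigma_eq_vecMulVec]
  exact posSemidef_vecMulVec_self_star _

lemma PiSigma_mul_self (hσ : σ ≠ 0) : PiSigma σ * PiSigma σ = PiSigma σ := by
  have he := enorm_pos_of_ne_zero hσ
  rw [PiSigma_eq_vecMulVec]
  refine vecMulVec_mul_self_of_star_dotProduct_eq_one ?_
  rw [star_trivial, smul_dotProduct, dotProduct_smul, smul_eq_mul, smul_eq_mul, ← enorm_mul_self]
  field_simp

end

lemma E0_eq (n : ℕ) : E0 n = (2 : ℝ)⁻¹ • (G0 n)ᵀ := by
  rw [E0, G0, transpose_fromCols, transpose_one, transpose_zero]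
  ext (i | i) j <;> simp

lemma transpose_G0_sub_smul_E0_mul (n : ℕ) (ρ : ℝ) (P : Matrix (Fin n) (Fin n) ℝ) :
    (G0 n)ᵀ - ρ • (E0 n * P) = (G0 n)ᵀ * (1 - (ρ / 2) • P) := by
  rw [E0_eq, Matrix.mul_sub, Matrix.mul_one, Matrix.mul_smul, Matrix.smul_mul, smul_smul,
    div_eq_mul_inv]

/-- Inequality (37) of the paper: `0 < ρ_σ < 1`, `Γ_σΓ_σᵀ ⪰ 0` and `Γ_σΓ_σᵀ ⪯ G₀ᵀG₀`. -/
theorem stmt2 {n : ℕ} (α : ℝ) (hα : 0 < α) (σ : Fin n → ℝ) (hσ : σ ≠ 0) :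
    0 < rhoSigma α σ ∧ rhoSigma α σ < 1 ∧
    (((G0 n)ᵀ - rhoSigma α σ • (E0 n * PiSigma σ)) *
      ((G0 n)ᵀ - rhoSigma α σ • (E0 n * PiSigma σ))ᵀ).PosSemidef ∧
    ((G0 n)ᵀ * G0 n -
      ((G0 n)ᵀ - rhoSigma α σ • (E0 n * PiSigma σ)) *
      ((G0 n)ᵀ - rhoSigma α σ • (E0 n * PiSigma σ))ᵀ).PosSemidef := by
  have hρ₀ := rhoSigma_pos hα.le hσ
  have hρ₁ := rhoSigma_lt_one hα hσ
  rw [transpose_G0_sub_smul_E0_mul]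
  simp only [← conjTranspose_eq_transpose_of_trivial]
  refine ⟨hρ₀, hρ₁, posSemidef_self_mul_conjTranspose _,
    posSemidef_conjTranspose_mul_sub_of_posSemidef_one_sub _ ?_⟩
  rw [one_sub_mul_conjTranspose_one_sub_smul (posSemidef_PiSigma σ).isHermitian
    (PiSigma_mul_self hσ) (IsSelfAdjoint.all _)]
  exact (posSemidef_PiSigma σ).smul (by nlinarith)
end
end

section
/- Let a < b be reals and let f, g : ℝ → ℝ be differentiable on [a, b]. Assume that for every t ∈ [a, b]: if f(t) ≥ g(t) then f′(t) < 0, and if g(t) ≥ f(t) then g′(t) < 0. Then the function h := max(f, g) is strictly decreasing on [a, b]; i.e., for all a ≤ s < t ≤ b, max(f(t), g(t)) < max(f(s), g(s)). -/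
open Set
open Filter

noncomputable section


lemma slope_ev_neg {f : ℝ → ℝ} {x : ℝ} (hf : DifferentiableAt ℝ f x) (hd : deriv f x < 0) :
    ∀ᶠ y in nhdsWithin x {x}ᶜ, slope f x y < 0 := by
  have h2 := hasDerivAt_iff_tendsto_slope.mp hf.hasDerivAt
  exact h2 (Iio_mem_nhds hd)

lemma right_lt {f : ℝ → ℝ} {x c : ℝ} (hf : DifferentiableAt ℝ f x)
    (h : f x < c ∨ (f x ≤ c ∧ deriv f x < 0)) :
    ∀ᶠ y in nhdsWithin x (Ioi x), f y < c := by
  rcases h with h | ⟨hle, hd⟩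
  · exact nhdsWithin_le_nhds (hf.continuousAt.eventually_lt_const h)
  · have := (slope_ev_neg hf hd).filter_mono
      (nhdsWithin_mono x (fun y hy => ne_of_gt hy))
    filter_upwards [this, eventually_mem_nhdsWithin] with y hs hy
    have hyx : (0:ℝ) < y - x := by simp [mem_Ioi] at hy; linarith
    rw [slope, vsub_eq_sub, smul_eq_mul] at hs
    by_contra hcon
    push_neg at hcon
    nlinarith [mul_nonneg (inv_pos.mpr hyx).le (by linarith : (0:ℝ) ≤ f y - f x)]

lemma left_gt {f : ℝ → ℝ} {x : ℝ} (hf : DifferentiableAt ℝ f x) (hd : deriv f x < 0) :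
    ∀ᶠ y in nhdsWithin x (Iio x), f x < f y := by
  have := (slope_ev_neg hf hd).filter_mono
    (nhdsWithin_mono x (fun y hy => ne_of_lt hy))
  filter_upwards [this, eventually_mem_nhdsWithin] with y hs hy
  have hyx : y - x < 0 := by simp [mem_Iio] at hy; linarith
  rw [slope, vsub_eq_sub, smul_eq_mul] at hs
  by_contra hcon
  push_neg at hcon
  nlinarith [mul_nonneg (neg_nonneg.mpr (inv_nonpos.mpr hyx.le))
    (neg_nonneg.mpr (by linarith : f y - f x ≤ 0))]

/-- The mechanism of Theorem 2 of the paper: if on `[a,b]` the function `f` is strictly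
decreasing wherever `f ≥ g` and `g` is strictly decreasing wherever `g ≥ f`, then the
pointwise maximum `max(f, g)` is strictly decreasing on `[a,b]`. -/
theorem stmt8 (a b : ℝ) (hab : a < b) (f g : ℝ → ℝ)
    (hf : ∀ t ∈ Icc a b, DifferentiableAt ℝ f t)
    (hg : ∀ t ∈ Icc a b, DifferentiableAt ℝ g t)
    (hfd : ∀ t ∈ Icc a b, g t ≤ f t → deriv f t < 0)
    (hgd : ∀ t ∈ Icc a b, f t ≤ g t → deriv g t < 0) :
    ∀ s t : ℝ, a ≤ s → s < t → t ≤ b → max (f t) (g t) < max (f s) (g s) := by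
  set h : ℝ → ℝ := fun u => max (f u) (g u) with hh
  -- local right decrease
  have Hright : ∀ x ∈ Icc a b, ∀ᶠ y in nhdsWithin x (Ioi x), h y < h x := by
    intro x hx
    have Hf : ∀ᶠ y in nhdsWithin x (Ioi x), f y < h x := by
      rcases lt_or_ge (f x) (g x) with hc | hc
      · exact right_lt (hf x hx) (Or.inl (lt_of_lt_of_le hc (le_max_right _ _)))
      · exact right_lt (hf x hx) (Or.inr ⟨le_max_left _ _, hfd x hx hc⟩)
    have Hg : ∀ᶠ y in nhdsWithin x (Ioi x), g y < h x := by
      rcases lt_or_ge (g x) (f x) with hc | hc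
      · exact right_lt (hg x hx) (Or.inl (lt_of_lt_of_le hc (le_max_left _ _)))
      · exact right_lt (hg x hx) (Or.inr ⟨le_max_right _ _, hgd x hx hc⟩)
    filter_upwards [Hf, Hg] with y h1 h2 using max_lt h1 h2
  -- local left increase
  have Hleft : ∀ x ∈ Icc a b, ∀ᶠ y in nhdsWithin x (Iio x), h x < h y := by
    intro x hx
    rcases le_total (g x) (f x) with hc | hc
    · have := left_gt (hf x hx) (hfd x hx hc)
      filter_upwards [this] with y hy
      calc h x = f x := max_eq_left hc
        _ < f y := hy
        _ ≤ h y := le_max_left _ _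
    · have := left_gt (hg x hx) (hgd x hx hc)
      filter_upwards [this] with y hy
      calc h x = g x := max_eq_right hc
        _ < g y := hy
        _ ≤ h y := le_max_right _ _
  intro s t hs hst htb
  by_contra hc
  push_neg at hc
  have hsab : s ∈ Icc a b := ⟨hs, le_trans hst.le htb⟩
  -- find s' ∈ (s,t) with h s' < h s
  obtain ⟨s', hs'lt, hs'mem⟩ :=
    ((Hright s hsab).and (Ioo_mem_nhdsGT_of_mem ⟨le_refl s, hst⟩)).exists
  -- max of h on [s', t]
  have hcont : ContinuousOn h (Icc s' t) := by
    intro u hu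
    have huab : u ∈ Icc a b :=
      ⟨le_trans (le_trans hs hs'mem.1.le) hu.1, le_trans hu.2 htb⟩
    have : ContinuousAt h u := (hf u huab).continuousAt.max (hg u huab).continuousAt
    exact this.continuousWithinAt
  obtain ⟨x₀, hx₀mem, hx₀max⟩ := isCompact_Icc.exists_isMaxOn
    (nonempty_Icc.mpr hs'mem.2.le) hcont
  have hx₀ab : x₀ ∈ Icc a b :=
    ⟨le_trans (le_trans hs hs'mem.1.le) hx₀mem.1, le_trans hx₀mem.2 htb⟩
  have hx₀gt : s' < x₀ := by
    rcases eq_or_lt_of_le hx₀mem.1 with heq | hlt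
    · exfalso
      have h1 : h t ≤ h x₀ := hx₀max ⟨hs'mem.2.le, le_refl t⟩
      rw [← heq] at h1
      have : h s ≤ h s' := le_trans hc h1
      linarith
    · exact hlt
  obtain ⟨y, hylt, hymem⟩ :=
    ((Hleft x₀ hx₀ab).and (Ioo_mem_nhdsLT_of_mem ⟨hx₀gt, le_refl x₀⟩)).exists
  have : h y ≤ h x₀ := hx₀max ⟨hymem.1.le, le_trans hymem.2.le hx₀mem.2⟩
  linarith
end
end

section
/- Let ν : [0, ∞) → [0, ∞) be continuous, let ε_N > 0 and ν_* > 0, and assume that for every t ≥ 0 with ν(t) > ν_*, the upper right Dini derivative satisfies D⁺ν(t) ≤ −ε_N √(ν(t)). If ν(0) > ν_*, then there exists t_* with 0 ≤ t_* ≤ (2/ε_N)(√(ν(0)) − √(ν_*)) such that ν(t_*) ≤ ν_*. -/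
/-!
While `ν` stays above `ν_*`, the Dini bound `D⁺ν ≤ -ε_N √ν` becomes
`D⁺√ν ≤ -ε_N / 2`, because `√ν(z) - √ν(x) = (ν(z) - ν(x)) / (√ν(z) + √ν(x))` and the
denominator tends to `2 √ν(x)`. Comparing `√ν` with the line `√ν(0) - (ε_N / 2) t`
shows that `√ν(T) ≤ √ν_*` at `T = (2 / ε_N)(√ν(0) - √ν_*)`, so `ν` cannot stay above
`ν_*` on all of `[0, T]`.
-/

open Set Filter

noncomputable section

/-- Upper right Dini derivative `D⁺h(t) = limsup_{s→0⁺}(h(t+s) − h(t))/s`, with values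
in the extended reals. -/
def diniUR (h : ℝ → ℝ) (t : ℝ) : EReal :=
  limsup (fun s => (((h (t + s) - h t) / s : ℝ) : EReal)) (nhdsWithin 0 (Ioi 0))

open Topology

theorem diniUR_eq_limsup_slope (h : ℝ → ℝ) (t : ℝ) :
    diniUR h t = limsup (fun z => (slope h t z : EReal)) (𝓝[>] t) := by
  rw [← add_zero t, ← Filter.map_add_left_nhdsGT, add_zero, diniUR, ← Filter.limsup_comp]
  simp only [Function.comp_def, slope_def_field, add_sub_cancel_left]

theorem eventually_slope_lt_of_diniUR_lt {h : ℝ → ℝ} {t c : ℝ} (hc : diniUR h t < c) :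
    ∀ᶠ z in 𝓝[>] t, slope h t z < c := by
  rw [diniUR_eq_limsup_slope] at hc
  exact (eventually_lt_of_limsup_lt hc).mono fun z hz => EReal.coe_lt_coe_iff.1 hz

theorem slope_sqrt_eq {f : ℝ → ℝ} {x z : ℝ} (hx : 0 < f x) (hz : 0 ≤ f z) :
    slope (fun t => √(f t)) x z = slope f x z / (√(f z) + √(f x)) := by
  have hpos : 0 < √(f z) + √(f x) := by positivity
  rw [slope_def_field, slope_def_field, eq_div_iff hpos.ne', div_mul_eq_mul_div]
  congr 1
  nlinarith [Real.sq_sqrt hz, Real.sq_sqrt hx.le]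

theorem eventually_slope_sqrt_lt {f : ℝ → ℝ} {x c r : ℝ} (hf : ContinuousWithinAt f (Ioi x) x)
    (hx : 0 < f x) (hc : ∀ᶠ z in 𝓝[>] x, slope f x z < c) (hr : c / (2 * √(f x)) < r) :
    ∀ᶠ z in 𝓝[>] x, slope (fun t => √(f t)) x z < r := by
  have hden : Tendsto (fun z => √(f z) + √(f x)) (𝓝[>] x) (𝓝 (2 * √(f x))) := by
    rw [two_mul]
    exact hf.sqrt.tendsto.add_const _
  have hquot : ∀ᶠ z in 𝓝[>] x, c / (√(f z) + √(f x)) < r :=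
    (tendsto_const_nhds.div hden (by positivity)).eventually (gt_mem_nhds hr)
  filter_upwards [hc, hquot, hf.eventually (lt_mem_nhds hx)] with z hcz hquotz hfz
  rw [slope_sqrt_eq hx hfz.le]
  exact (div_lt_div_of_pos_right hcz (by positivity)).trans hquotz

theorem sqrt_le_sub_mul_of_diniUR_le {f : ℝ → ℝ} {a b k : ℝ} (hf : ContinuousOn f (Icc a b))
    (hpos : ∀ x ∈ Ico a b, 0 < f x)
    (hdini : ∀ x ∈ Ico a b, diniUR f x ≤ ((-k * √(f x) : ℝ) : EReal)) :
    ∀ x ∈ Icc a b, √(f x) ≤ √(f a) - k / 2 * (x - a) := by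
  have hB (x : ℝ) : HasDerivAt (fun t => √(f a) - k / 2 * (t - a)) (-(k / 2)) x := by
    simpa using ((hasDerivAt_id x).sub_const a).const_mul (k / 2) |>.const_sub (√(f a))
  refine image_le_of_liminf_slope_right_le_deriv_boundary hf.sqrt (by simp)
    (fun x _ => (hB x).continuousAt.continuousWithinAt) (fun x _ => (hB x).hasDerivWithinAt)
    fun x hx r hr => ?_
  have hfx := hpos x hx
  have hsx : 0 < √(f x) := Real.sqrt_pos.2 hfx
  obtain ⟨r', hkr', hr'⟩ := exists_between hr
  have hcont : ContinuousWithinAt f (Ioi x) x :=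
    (hf x (Ico_subset_Icc_self hx)).mono_of_mem_nhdsWithin (Icc_mem_nhdsGT_of_mem hx)
  have hslope : ∀ᶠ z in 𝓝[>] x, slope f x z < 2 * √(f x) * r' :=
    eventually_slope_lt_of_diniUR_lt <| (hdini x hx).trans_lt <|
      EReal.coe_lt_coe_iff.2 (by nlinarith)
  refine (eventually_slope_sqrt_lt hcont hfx hslope ?_).frequently
  rwa [mul_div_cancel_left₀ _ (by positivity)]

theorem stmt9_general (ν : ℝ → ℝ) (hcont : ContinuousOn ν (Ici 0))
    (εN νstar : ℝ) (hε : 0 < εN) (hstar : 0 < νstar)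
    (hdini : ∀ t : ℝ, 0 ≤ t → νstar < ν t →
      diniUR ν t ≤ ((-εN * Real.sqrt (ν t) : ℝ) : EReal))
    (h0 : νstar < ν 0) :
    ∃ tstar : ℝ, 0 ≤ tstar ∧
      tstar ≤ (2 / εN) * (Real.sqrt (ν 0) - Real.sqrt νstar) ∧
      ν tstar ≤ νstar := by
  set T := (2 / εN) * (√(ν 0) - √νstar) with hT
  have hT0 : 0 ≤ T := mul_nonneg (by positivity) (sub_nonneg.2 (Real.sqrt_le_sqrt h0.le))
  by_contra! habove
  have hbound := sqrt_le_sub_mul_of_diniUR_le (hcont.mono Icc_subset_Ici_self)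
    (fun x hx => hstar.trans (habove x hx.1 hx.2.le))
    (fun x hx => hdini x hx.1 (habove x hx.1 hx.2.le)) T ⟨hT0, le_rfl⟩
  have hsqrtT : √(ν T) ≤ √νstar := by
    convert hbound using 1
    rw [hT]
    field_simp
    ring
  exact (habove T hT0 le_rfl).not_ge ((Real.sqrt_le_sqrt_iff hstar.le).1 hsqrtT)

/-- The finite-time reaching estimate of Corollary 1 of the paper: if `D⁺ν ≤ −ε_N √ν`
whenever `ν > ν_*`, the residual level set `{ν ≤ ν_*}` is attained in time at most
`(2/ε_N)(√ν(0) − √ν_*)`. -/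
theorem stmt9 (ν : ℝ → ℝ) (hcont : ContinuousOn ν (Ici 0))
    (hnonneg : ∀ t : ℝ, 0 ≤ t → 0 ≤ ν t)
    (εN νstar : ℝ) (hε : 0 < εN) (hstar : 0 < νstar)
    (hdini : ∀ t : ℝ, 0 ≤ t → νstar < ν t →
      diniUR ν t ≤ ((-εN * Real.sqrt (ν t) : ℝ) : EReal))
    (h0 : νstar < ν 0) :
    ∃ tstar : ℝ, 0 ≤ tstar ∧
      tstar ≤ (2 / εN) * (Real.sqrt (ν 0) - Real.sqrt νstar) ∧
      ν tstar ≤ νstar :=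
  stmt9_general ν hcont εN νstar hε hstar hdini h0
end
end

section
/- Let n, m ∈ ℕ, B ∈ ℝ^{n×m}, D ∈ ℝ^{n×n}, and scalars ρ, α, γ, μ, β, π, κ all positive; set Z_d := diag(μI_n, βI_n, πI_n, κI_n) ∈ ℝ^{4n×4n}. Let X ∈ ℝ^{2n×2n} be symmetric positive definite and Y ∈ ℝ^{m×2n}, and set P := X^{-1} and K := Y X^{-1}. Then the following are equivalent: (i) the symmetric block matrix with upper-left block A₀X + XA₀ᵀ + B₀Y + YᵀB₀ᵀ + ρX + μE₀E₀ᵀ + βF₀F₀ᵀ + (π + κ)G₀ᵀG₀, lower-left block the 4n×2n stacked matrix [BY; γ^{-1}G₀X; α^{-1}DG₀X; 0], upper-right its transpose, and lower-right block −Z_d, is negative definite; (ii) A_Kᵀ P + P A_K + μ P E₀ E₀ᵀ P + μ^{-1} Kᵀ Bᵀ B K + β P F₀ F₀ᵀ P + β^{-1} γ^{-2} G₀ᵀ G₀ + (π + κ) P G₀ᵀ G₀ P + π^{-1} α^{-2} G₀ᵀ Dᵀ D G₀ + ρ P is negative definite. -/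
/-!
Condition (i) is a block LMI whose lower-right block `-Z_d` is negative definite, so by the
Schur complement it is equivalent to `W + Cᵀ Z_d⁻¹ C ≺ 0`, where `W` is its upper-left and `C` its
lower-left block. Congruence with `P = X⁻¹` preserves definiteness, and `P (W + Cᵀ Z_d⁻¹ C) P`
expands, using `K = Y P` and `P X = X P = 1`, to the matrix of (ii).
-/

open Matrix

noncomputable section

/-- The block matrix `F₀ = [0; I_n] ∈ ℝ^{2n×n}`. -/
def F0 (n : ℕ) : Matrix (Fin n ⊕ Fin n) (Fin n) ℝ := fromRows 0 1

/-- The block matrix `A₀ = [[0,0],[I_n,0]] ∈ ℝ^{2n×2n}`. -/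
def A0 (n : ℕ) : Matrix (Fin n ⊕ Fin n) (Fin n ⊕ Fin n) ℝ := fromBlocks 0 0 1 0

open scoped ComplexOrder

namespace Matrix

theorem conjTranspose_fromRows_mul_fromBlocks_zero_mul_fromRows {R m₁ m₂ n : Type*}
    [Semiring R] [Star R] [Fintype m₁] [Fintype m₂] (C₁ : Matrix m₁ n R)
    (C₂ : Matrix m₂ n R) (Z₁ : Matrix m₁ m₁ R) (Z₂ : Matrix m₂ m₂ R) :
    (fromRows C₁ C₂)ᴴ * fromBlocks Z₁ 0 0 Z₂ * fromRows C₁ C₂ = C₁ᴴ * Z₁ * C₁ + C₂ᴴ * Z₂ * C₂ := by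
  simp [conjTranspose_fromRows_eq_fromCols_conjTranspose, fromCols_mul_fromBlocks,
    fromCols_mul_fromRows]

variable {𝕜 m n : Type*} [RCLike 𝕜] [Fintype m] [Fintype n] [DecidableEq m] [DecidableEq n]

theorem PosDef.posDef_fromBlocks₂₂_iff {D : Matrix n n 𝕜} (hD : D.PosDef) (A : Matrix m m 𝕜)
    (B : Matrix m n 𝕜) : (fromBlocks A B Bᴴ D).PosDef ↔ (A - B * D⁻¹ * Bᴴ).PosDef := by
  have := hD.isUnit.invertible
  have hsemi := hD.fromBlocks₂₂ A B
  -- a positive semidefinite matrix is definite iff it is invertible, and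
  -- `det (fromBlocks A B Bᴴ D) = det D * det (A - B D⁻¹ Bᴴ)`
  have hunit : IsUnit (fromBlocks A B Bᴴ D) ↔ IsUnit (A - B * D⁻¹ * Bᴴ) := by
    rw [isUnit_iff_isUnit_det, isUnit_iff_isUnit_det (A - _), det_fromBlocks₂₂,
      invOf_eq_nonsing_inv, IsUnit.mul_iff]
    exact and_iff_right ((isUnit_iff_isUnit_det D).mp hD.isUnit)
  exact ⟨fun h => (hsemi.mp h.posSemidef).posDef_iff_isUnit.mpr (hunit.mp h.isUnit),
    fun h => (hsemi.mpr h.posSemidef).posDef_iff_isUnit.mpr (hunit.mpr h.isUnit)⟩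

theorem PosDef.fromBlocks_zero {A : Matrix m m 𝕜} {D : Matrix n n 𝕜} (hA : A.PosDef)
    (hD : D.PosDef) : (fromBlocks A 0 0 D).PosDef := by
  simpa using (hD.posDef_fromBlocks₂₂_iff A 0).mpr (by simpa using hA)

theorem posDef_neg_fromBlocks_iff {Z : Matrix n n 𝕜} (hZ : Z.PosDef) (W : Matrix m m 𝕜)
    (C : Matrix n m 𝕜) :
    (-fromBlocks W Cᴴ C (-Z)).PosDef ↔ (-(W + Cᴴ * Z⁻¹ * C)).PosDef := by
  convert hZ.posDef_fromBlocks₂₂_iff (-W) (-Cᴴ) using 2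
  · simp [fromBlocks_neg]
  · simp [sub_eq_add_neg, add_comm]

end Matrix

theorem stmt13_general {n m : ℕ} (B : Matrix (Fin n) (Fin m) ℝ) (D : Matrix (Fin n) (Fin n) ℝ)
    (ρ α γ μ β π κ : ℝ) (hμ : 0 < μ) (hβ : 0 < β) (hπ : 0 < π) (hκ : 0 < κ)
    (X : Matrix (Fin n ⊕ Fin n) (Fin n ⊕ Fin n) ℝ) (hX : X.PosDef)
    (Y : Matrix (Fin m) (Fin n ⊕ Fin n) ℝ) :
    (-(fromBlocks
        (A0 n * X + X * (A0 n)ᵀ + fromRows B 0 * Y + Yᵀ * (fromRows B 0)ᵀ + ρ • X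
          + μ • (E0 n * (E0 n)ᵀ) + β • (F0 n * (F0 n)ᵀ) + (π + κ) • ((G0 n)ᵀ * G0 n))
        (fromRows (fromRows (B * Y) (γ⁻¹ • (G0 n * X)))
          (fromRows (α⁻¹ • (D * G0 n * X)) (0 : Matrix (Fin n) (Fin n ⊕ Fin n) ℝ)))ᵀ
        (fromRows (fromRows (B * Y) (γ⁻¹ • (G0 n * X)))
          (fromRows (α⁻¹ • (D * G0 n * X)) (0 : Matrix (Fin n) (Fin n ⊕ Fin n) ℝ)))
        (-(fromBlocks (fromBlocks (μ • 1) 0 0 (β • 1)) 0 0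
            (fromBlocks (π • 1) 0 0 (κ • 1)))))).PosDef
    ↔
    (-((A0 n + fromRows B 0 * (Y * X⁻¹))ᵀ * X⁻¹ + X⁻¹ * (A0 n + fromRows B 0 * (Y * X⁻¹))
        + μ • (X⁻¹ * E0 n * (E0 n)ᵀ * X⁻¹)
        + μ⁻¹ • ((Y * X⁻¹)ᵀ * Bᵀ * B * (Y * X⁻¹))
        + β • (X⁻¹ * F0 n * (F0 n)ᵀ * X⁻¹)
        + (β⁻¹ * (γ ^ 2)⁻¹) • ((G0 n)ᵀ * G0 n)
        + (π + κ) • (X⁻¹ * (G0 n)ᵀ * G0 n * X⁻¹)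
        + (π⁻¹ * (α ^ 2)⁻¹) • ((G0 n)ᵀ * Dᵀ * D * G0 n)
        + ρ • X⁻¹)).PosDef := by
  set Zd : Matrix ((Fin n ⊕ Fin n) ⊕ (Fin n ⊕ Fin n)) ((Fin n ⊕ Fin n) ⊕ (Fin n ⊕ Fin n)) ℝ :=
    fromBlocks (fromBlocks (μ • 1) 0 0 (β • 1)) 0 0 (fromBlocks (π • 1) 0 0 (κ • 1)) with hZd
  have hZ : Zd.PosDef :=
    (PosDef.one.smul hμ |>.fromBlocks_zero <| PosDef.one.smul hβ).fromBlocks_zero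
      (PosDef.one.smul hπ |>.fromBlocks_zero <| PosDef.one.smul hκ)
  have hZinv : Zd⁻¹ = fromBlocks (fromBlocks (μ⁻¹ • 1) 0 0 (β⁻¹ • 1)) 0 0
      (fromBlocks (π⁻¹ • 1) 0 0 (κ⁻¹ • 1)) :=
    inv_eq_left_inv <| by simp [hZd, fromBlocks_multiply, smul_smul, hμ.ne', hβ.ne', hπ.ne', hκ.ne']
  have hXt : Xᵀ = X := hX.isHermitian.eq
  have hPt : (X⁻¹)ᵀ = X⁻¹ := hX.isHermitian.inv.eq
  have hdet : IsUnit X.det := (isUnit_iff_isUnit_det X).mp hX.isUnit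
  rw [← conjTranspose_eq_transpose_of_trivial (fromRows (fromRows (B * Y) _) _),
    posDef_neg_fromBlocks_iff hZ,
    ← (isUnit_nonsing_inv_iff.mpr hX.isUnit).posDef_star_left_conjugate_iff]
  convert Iff.rfl using 2
  rw [star_eq_conjTranspose, hX.isHermitian.inv.eq, hZinv]
  simp only [conjTranspose_fromRows_mul_fromBlocks_zero_mul_fromRows]
  simp only [conjTranspose_eq_transpose_of_trivial, transpose_add, transpose_mul, transpose_smul,
    hXt, hPt, Matrix.mul_add, Matrix.add_mul, Matrix.neg_mul, Matrix.mul_neg, Matrix.mul_zero,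
    add_zero, Matrix.smul_mul, Matrix.mul_smul, Matrix.mul_assoc, Matrix.mul_one,
    mul_nonsing_inv, nonsing_inv_mul_cancel_left, hdet]
  module

/-- The one-to-one change of variables (64) of the paper: LMI (65) is equivalent to
inequality (43) via congruence with `diag(P, I)` and a Schur complement with respect to
the `−Z_d` block. -/
theorem stmt13 {n m : ℕ} (B : Matrix (Fin n) (Fin m) ℝ) (D : Matrix (Fin n) (Fin n) ℝ)
    (ρ α γ μ β π κ : ℝ) (hρ : 0 < ρ) (hα : 0 < α) (hγ : 0 < γ) (hμ : 0 < μ)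
    (hβ : 0 < β) (hπ : 0 < π) (hκ : 0 < κ)
    (X : Matrix (Fin n ⊕ Fin n) (Fin n ⊕ Fin n) ℝ) (hX : X.PosDef)
    (Y : Matrix (Fin m) (Fin n ⊕ Fin n) ℝ) :
    (-(fromBlocks
        (A0 n * X + X * (A0 n)ᵀ + fromRows B 0 * Y + Yᵀ * (fromRows B 0)ᵀ + ρ • X
          + μ • (E0 n * (E0 n)ᵀ) + β • (F0 n * (F0 n)ᵀ) + (π + κ) • ((G0 n)ᵀ * G0 n))
        (fromRows (fromRows (B * Y) (γ⁻¹ • (G0 n * X)))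
          (fromRows (α⁻¹ • (D * G0 n * X)) (0 : Matrix (Fin n) (Fin n ⊕ Fin n) ℝ)))ᵀ
        (fromRows (fromRows (B * Y) (γ⁻¹ • (G0 n * X)))
          (fromRows (α⁻¹ • (D * G0 n * X)) (0 : Matrix (Fin n) (Fin n ⊕ Fin n) ℝ)))
        (-(fromBlocks (fromBlocks (μ • 1) 0 0 (β • 1)) 0 0
            (fromBlocks (π • 1) 0 0 (κ • 1)))))).PosDef
    ↔
    (-((A0 n + fromRows B 0 * (Y * X⁻¹))ᵀ * X⁻¹ + X⁻¹ * (A0 n + fromRows B 0 * (Y * X⁻¹))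
        + μ • (X⁻¹ * E0 n * (E0 n)ᵀ * X⁻¹)
        + μ⁻¹ • ((Y * X⁻¹)ᵀ * Bᵀ * B * (Y * X⁻¹))
        + β • (X⁻¹ * F0 n * (F0 n)ᵀ * X⁻¹)
        + (β⁻¹ * (γ ^ 2)⁻¹) • ((G0 n)ᵀ * G0 n)
        + (π + κ) • (X⁻¹ * (G0 n)ᵀ * G0 n * X⁻¹)
        + (π⁻¹ * (α ^ 2)⁻¹) • ((G0 n)ᵀ * Dᵀ * D * G0 n)
        + ρ • X⁻¹)).PosDef :=
  stmt13_general B D ρ α γ μ β π κ hμ hβ hπ hκ X hX Y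
end
end

section
/- Let t_s ∈ ℝ, k > 0, and let V : [t_s, ∞) → [0, ∞) be continuous. Assume that for every t ≥ t_s with V(t) > 0, the upper right Dini derivative satisfies D⁺V(t) ≤ −k √(V(t)), and that V is nonincreasing where V = 0 is attained (e.g. D⁺V(t) ≤ 0 for all t ≥ t_s). Then V(t) = 0 for every t ≥ t_s + (2/k) √(V(t_s)). -/
open Set Filter

noncomputable section

/-!
The parabola `B(t) = (c - κ (t - a) / 2)²` solves `B' = -κ √B` and vanishes at `a + 2c/κ`.
For `κ < k` it is a strict supersolution of `D⁺V ≤ -k √V`, so by the fencing theorem it stays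
above `V` once it starts above it; letting `κ → k` forces `V` to vanish at `a + 2√V(a)/k`, and
`D⁺V ≤ 0` keeps it at zero afterwards.
-/

open Topology

lemma tendsto_sub_const_nhdsGT {G : Type*} [AddCommGroup G] [PartialOrder G]
    [IsOrderedAddMonoid G] [TopologicalSpace G] [IsTopologicalAddGroup G] (x : G) :
    Tendsto (· - x) (𝓝[>] x) (𝓝[>] 0) := by
  refine tendsto_nhdsWithin_iff.2 ⟨?_, ?_⟩
  · exact tendsto_nhdsWithin_of_tendsto_nhds (by simpa using (continuous_sub_right x).tendsto x)
  · filter_upwards [self_mem_nhdsWithin] with z hz using sub_pos.2 (mem_Ioi.1 hz)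

lemma frequently_slope_lt_of_diniUR_le {f : ℝ → ℝ} {x c r : ℝ}
    (h : diniUR f x ≤ (c : EReal)) (hr : c < r) : ∃ᶠ z in 𝓝[>] x, slope f x z < r := by
  have hquot : ∀ᶠ s in 𝓝[>] 0, (((f (x + s) - f x) / s : ℝ) : EReal) < r :=
    eventually_lt_of_limsup_lt (h.trans_lt (EReal.coe_lt_coe_iff.2 hr))
  refine (((tendsto_sub_const_nhdsGT x).eventually hquot).mono fun z hz => ?_).frequently
  rw [slope_def_field]
  simpa using hz

lemma antitoneOn_of_diniUR_nonpos {f : ℝ → ℝ} {s : Set ℝ} (hs : s.OrdConnected)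
    (hf : ContinuousOn f s) (h : ∀ x ∈ s, diniUR f x ≤ 0) : AntitoneOn f s := by
  intro x hx y hy hxy
  have hsub : Icc x y ⊆ s := hs.out hx hy
  refine image_le_of_liminf_slope_right_le_deriv_boundary (B := fun _ => f x) (hf.mono hsub)
    le_rfl continuousOn_const (fun z _ => hasDerivWithinAt_const z _ (f x)) (fun z hz r hr => ?_)
    (right_mem_Icc.2 hxy)
  exact frequently_slope_lt_of_diniUR_le (by simpa using h z (hsub (Ico_subset_Icc_self hz))) hr

lemma le_sq_of_diniUR_le_neg_mul_sqrt {V : ℝ → ℝ} {a c k κ : ℝ} (hκ : 0 < κ) (hκk : κ < k)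
    (hcont : ContinuousOn V (Icc a (a + 2 * c / κ)))
    (hdini : ∀ t ∈ Ico a (a + 2 * c / κ), diniUR V t ≤ ((-k * √(V t) : ℝ) : EReal))
    (ha : V a ≤ c ^ 2) :
    ∀ t ∈ Icc a (a + 2 * c / κ), V t ≤ (c - κ / 2 * (t - a)) ^ 2 := by
  refine image_le_of_liminf_slope_right_lt_deriv_boundary (f' := fun t => -k * √(V t))
    (B' := fun t => -κ * (c - κ / 2 * (t - a))) hcont
    (fun t ht r hr => frequently_slope_lt_of_diniUR_le (hdini t ht) hr) (by simpa using ha)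
    (fun t => ?_) (fun t ht hVt => ?_)
  · refine (((((hasDerivAt_id t).sub_const a).const_mul (κ / 2)).const_sub c).fun_pow 2
      ).congr_deriv ?_
    simp only [id]
    ring
  · have hpos : 0 < c - κ / 2 * (t - a) := by
      have := (lt_div_iff₀ hκ).1 (show t - a < 2 * c / κ by linarith [ht.2])
      linarith
    simp only [hVt, Real.sqrt_sq hpos.le]
    nlinarith

lemma eq_zero_of_diniUR_le_neg_mul_sqrt {V : ℝ → ℝ} {a k : ℝ} (hk : 0 < k)
    (hcont : ContinuousOn V (Ici a)) (hnonneg : ∀ t ∈ Ici a, 0 ≤ V t)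
    (hdini : ∀ t ∈ Ici a, diniUR V t ≤ ((-k * √(V t) : ℝ) : EReal)) :
    V (a + 2 / k * √(V a)) = 0 := by
  set c := √(V a)
  set t₀ := a + 2 / k * c
  have hc : 0 ≤ c := Real.sqrt_nonneg _
  have ht₀ : a ≤ t₀ := le_add_of_nonneg_right (by positivity)
  have hbound : ∀ κ ∈ Ioo 0 k, V t₀ ≤ (c - κ / 2 * (t₀ - a)) ^ 2 := by
    intro κ ⟨hκ, hκk⟩
    refine le_sq_of_diniUR_le_neg_mul_sqrt hκ hκk (hcont.mono Icc_subset_Ici_self)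
      (fun t ht => hdini t ht.1) (Real.sq_sqrt (hnonneg a self_mem_Ici)).ge t₀ ⟨ht₀, ?_⟩
    have : 2 / k * c ≤ 2 * c / κ := by
      rw [div_mul_eq_mul_div, mul_comm]
      exact div_le_div_of_nonneg_left (by positivity) hκ hκk.le
    simpa [t₀] using this
  have hlim : Tendsto (fun κ => (c - κ / 2 * (t₀ - a)) ^ 2) (𝓝[<] k) (𝓝 0) := by
    have : (c - k / 2 * (t₀ - a)) ^ 2 = 0 := by
      simp only [t₀]
      field_simp
      ring
    rw [← this]
    exact (Continuous.tendsto (by fun_prop) k).mono_left nhdsWithin_le_nhds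
  exact le_antisymm (ge_of_tendsto hlim (mem_of_superset (Ioo_mem_nhdsLT hk) hbound))
    (hnonneg t₀ ht₀)

/-- The finite-time convergence comparison argument of Section 6 of the paper:
`D⁺V ≤ −k√V` where `V > 0` (and `D⁺V ≤ 0` everywhere) forces `V` to vanish after the
finite time `t_s + (2/k)√V(t_s)`. -/
theorem stmt17 (ts k : ℝ) (hk : 0 < k) (V : ℝ → ℝ)
    (hcont : ContinuousOn V (Ici ts)) (hnonneg : ∀ t : ℝ, ts ≤ t → 0 ≤ V t)
    (hdini : ∀ t : ℝ, ts ≤ t → 0 < V t →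
      diniUR V t ≤ ((-k * Real.sqrt (V t) : ℝ) : EReal))
    (hmono : ∀ t : ℝ, ts ≤ t → diniUR V t ≤ ((0 : ℝ) : EReal)) :
    ∀ t : ℝ, ts + (2 / k) * Real.sqrt (V ts) ≤ t → V t = 0 := by
  intro t ht
  have hbound : ∀ x ∈ Ici ts, diniUR V x ≤ ((-k * √(V x) : ℝ) : EReal) := by
    intro x hx
    rcases (hnonneg x hx).lt_or_eq with hpos | hzero
    · exact hdini x hx hpos
    · simpa [← hzero] using hmono x hx
  have hanti : AntitoneOn V (Ici ts) :=
    antitoneOn_of_diniUR_nonpos ordConnected_Ici hcont (by simpa using hmono)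
  have hts : ts ≤ ts + 2 / k * √(V ts) := le_add_of_nonneg_right (by positivity)
  have hzero := eq_zero_of_diniUR_le_neg_mul_sqrt hk hcont hnonneg hbound
  exact le_antisymm (hzero ▸ hanti hts (hts.trans ht) ht) (hnonneg t (hts.trans ht))
end
end
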